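/- Let S = C₁ ∨ ⋯ ∨ C_N be a DNF in which every clause has exactly m literals on distinct variables, and each clause shares a variable with at most d other clauses. If e·(d+1) ≤ 2^m, then S is not a tautology. -/

import Mathlib

/-!
Counting form of the symmetric Lovász local lemma. If `0 ≤ x < 1` and `p ≤ x (1 - x)^d`, strong
induction on `T` shows that among the outcomes avoiding the events of `T`, at most a fraction `x`
lie in `A k` (for `k ∉ T`): split `T` into the at most `d` neighbours of `k` and the rest; `A k`
has density at most `p` among the outcomes avoiding the rest, and putting the neighbours back one
at a time shrinks that count by a factor of at least `1 - x` each time. Hence some outcome avoids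
every event. The condition `e p (d + 1) ≤ 1` yields such an `x`, namely `1 / (d + 1)`, because
`(1 + 1/d)^d ≤ e`.

For a DNF, the bad event of clause `k` is the set of assignments satisfying it. Among the
assignments avoiding clauses that share no variable with clause `k`, it has density exactly
`2^(-m)`, because those clauses leave the `m` variables of clause `k` free.
-/

open Finset

theorem Real.exists_le_mul_one_sub_pow_of_exp_mul_le {p : ℝ} {d : ℕ} (hp : 0 ≤ p)
    (h : Real.exp 1 * p * (d + 1) ≤ 1) : ∃ x, 0 ≤ x ∧ x < 1 ∧ p ≤ x * (1 - x) ^ d := by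
  rcases Nat.eq_zero_or_pos d with rfl | hd
  · refine ⟨p, hp, ?_, by simp⟩
    have := Real.add_one_lt_exp one_ne_zero
    norm_num at h
    nlinarith
  refine ⟨(d + 1 : ℝ)⁻¹, by positivity, inv_lt_one_of_one_lt₀ (by simpa using hd), ?_⟩
  have hd' : (0 : ℝ) < d := by exact_mod_cast hd
  have hbase : 1 - (d + 1 : ℝ)⁻¹ = (1 + (d : ℝ)⁻¹)⁻¹ := by field_simp; ring
  have he : (Real.exp 1)⁻¹ ≤ (1 - (d + 1 : ℝ)⁻¹) ^ d := by
    rw [hbase, inv_pow]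
    exact inv_anti₀ (by positivity) Real.one_add_inv_pow_le_exp
  calc p ≤ (d + 1 : ℝ)⁻¹ * (Real.exp 1)⁻¹ := by
        rw [← mul_inv, ← one_div, le_div_iff₀ (by positivity)]
        linarith
    _ ≤ _ := by gcongr

theorem Finset.card_filter_eqOn_mul_pow {α β : Type*} [DecidableEq α] [Fintype β]
    [DecidableEq β]
    (V : Finset α) (c : α → β) (s : Finset (α → β))
    (hs : ∀ a b, (∀ i ∉ V, a i = b i) → a ∈ s → b ∈ s) :
    #(s.filter fun a => ∀ i ∈ V, a i = c i) * Fintype.card β ^ #V = #s := by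
  have hcard : Fintype.card β ^ #V = #(univ : Finset (V → β)) := by simp
  rw [hcard, ← card_product]
  symm
  refine card_bij' (fun a _ => (V.piecewise c a, fun v => a v))
    (fun bh _ => fun i => if hi : i ∈ V then bh.2 ⟨i, hi⟩ else bh.1 i) ?_ ?_ ?_ ?_
  · intro a ha
    simp only [mem_product, mem_filter, mem_univ, and_true]
    refine ⟨hs a _ (fun i hi => (V.piecewise_eq_of_notMem c a hi).symm) ha,
      fun i hi => V.piecewise_eq_of_mem c a hi⟩
  · rintro ⟨b, h⟩ hbh
    simp only [mem_product, mem_filter, mem_univ, and_true] at hbh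
    exact hs b _ (fun i hi => by simp [hi]) hbh.1
  · intro a ha
    funext i
    by_cases hi : i ∈ V <;> simp [hi]
  · rintro ⟨b, h⟩ hbh
    simp only [mem_product, mem_filter, mem_univ, and_true] at hbh
    ext i
    · by_cases hi : i ∈ V
      · simp [hi, hbh.2 i hi]
      · simp [hi]
    · simp

namespace LovaszLocalLemma

variable {Ω ι : Type*} [Fintype Ω] [DecidableEq Ω] (A : ι → Finset Ω)

def avoiding (T : Finset ι) : Finset Ω := univ \ T.biUnion A

variable {A}

theorem mem_avoiding {T : Finset ι} {ω : Ω} :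
    ω ∈ avoiding A T ↔ ∀ j ∈ T, ω ∉ A j := by
  simp [avoiding]

theorem avoiding_anti {T T' : Finset ι} (h : T ⊆ T') : avoiding A T' ⊆ avoiding A T :=
  sdiff_subset_sdiff subset_rfl (biUnion_subset_biUnion_of_subset_left A h)

variable [DecidableEq ι]

theorem avoiding_insert (j : ι) (T : Finset ι) :
    avoiding A (insert j T) = avoiding A T \ A j := by
  ext ω; simp [mem_avoiding, and_comm]

theorem one_sub_mul_card_le_card_avoiding_insert {x : ℝ} {j : ι} {T : Finset ι}
    (h : (#(avoiding A T ∩ A j) : ℝ) ≤ x * #(avoiding A T)) :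
    (1 - x) * #(avoiding A T) ≤ #(avoiding A (insert j T)) := by
  have hsplit : (#(avoiding A T \ A j) : ℝ) + #(avoiding A T ∩ A j) = #(avoiding A T) := by
    exact_mod_cast card_sdiff_add_card_inter (avoiding A T) (A j)
  rw [avoiding_insert]
  linarith

theorem pow_mul_card_avoiding_le_card_avoiding_union {x : ℝ} (hx : x ≤ 1) {U S : Finset ι}
    (hUS : Disjoint U S)
    (hbound : ∀ V ⊂ U ∪ S, ∀ j ∉ V,
      (#(avoiding A V ∩ A j) : ℝ) ≤ x * #(avoiding A V)) :
    (1 - x) ^ #S * #(avoiding A U) ≤ #(avoiding A (U ∪ S)) := by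
  induction S using Finset.induction_on with
  | empty => simp
  | @insert j S hjS ih =>
    have hjUS : j ∉ U ∪ S := by
      simp only [mem_union, not_or]
      exact ⟨disjoint_right.mp hUS (mem_insert_self j S), hjS⟩
    have hssub : U ∪ S ⊂ U ∪ insert j S := by
      rw [union_insert]; exact ssubset_insert hjUS
    have ih := ih (disjoint_of_subset_right (subset_insert j S) hUS)
      fun V hV => hbound V (hV.trans hssub)
    have hstep := one_sub_mul_card_le_card_avoiding_insert (hbound _ hssub j hjUS)
    rw [union_insert, card_insert_of_notMem hjS, pow_succ]
    calc (1 - x) ^ #S * (1 - x) * #(avoiding A U)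
        = (1 - x) * ((1 - x) ^ #S * #(avoiding A U)) := by ring
      _ ≤ (1 - x) * #(avoiding A (U ∪ S)) := by gcongr
      _ ≤ _ := hstep

variable {Γ : ι → Finset ι} {p x : ℝ} {d : ℕ}

theorem card_avoiding_inter_le (hx₀ : 0 ≤ x) (hx₁ : x ≤ 1) (hpx : p ≤ x * (1 - x) ^ d)
    (hΓ : ∀ k, #(Γ k) ≤ d)
    (hind : ∀ k T, Disjoint T (Γ k) → k ∉ T →
      (#(avoiding A T ∩ A k) : ℝ) ≤ p * #(avoiding A T))
    (T : Finset ι) : ∀ k ∉ T, (#(avoiding A T ∩ A k) : ℝ) ≤ x * #(avoiding A T) := by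
  induction T using Finset.strongInduction with
  | H T ih =>
  intro k hkT
  have hpeel := pow_mul_card_avoiding_le_card_avoiding_union hx₁ (disjoint_sdiff_inter T (Γ k))
    (by rwa [sdiff_union_inter])
  rw [sdiff_union_inter] at hpeel
  have hSd : #(T ∩ Γ k) ≤ d := (card_le_card inter_subset_right).trans (hΓ k)
  calc (#(avoiding A T ∩ A k) : ℝ)
      ≤ #(avoiding A (T \ Γ k) ∩ A k) := by
        gcongr; exact avoiding_anti sdiff_subset
    _ ≤ p * #(avoiding A (T \ Γ k)) :=
        hind k _ sdiff_disjoint fun h => hkT (sdiff_subset h)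
    _ ≤ x * (1 - x) ^ d * #(avoiding A (T \ Γ k)) := by gcongr
    _ ≤ x * (1 - x) ^ #(T ∩ Γ k) * #(avoiding A (T \ Γ k)) := by
        gcongr x * ?_ * _
        exact pow_le_pow_of_le_one (by linarith) (by linarith) hSd
    _ ≤ x * #(avoiding A T) := by rw [mul_assoc]; gcongr

theorem card_avoiding_pos [Nonempty Ω] (hx₀ : 0 ≤ x) (hx₁ : x < 1)
    (hpx : p ≤ x * (1 - x) ^ d) (hΓ : ∀ k, #(Γ k) ≤ d)
    (hind : ∀ k T, Disjoint T (Γ k) → k ∉ T →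
      (#(avoiding A T ∩ A k) : ℝ) ≤ p * #(avoiding A T))
    (T : Finset ι) : 0 < #(avoiding A T) := by
  induction T using Finset.induction_on with
  | empty => simp [avoiding, Fintype.card_pos]
  | @insert j T hjT ih =>
    have hstep := one_sub_mul_card_le_card_avoiding_insert
      (card_avoiding_inter_le hx₀ hx₁.le hpx hΓ hind T j hjT)
    have hpos : (0 : ℝ) < (1 - x) * #(avoiding A T) :=
      mul_pos (by linarith) (by exact_mod_cast ih)
    exact_mod_cast hpos.trans_le hstep

theorem exists_forall_notMem [Fintype ι] [Nonempty Ω] (hx₀ : 0 ≤ x) (hx₁ : x < 1)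
    (hpx : p ≤ x * (1 - x) ^ d) (hΓ : ∀ k, #(Γ k) ≤ d)
    (hind : ∀ k T, Disjoint T (Γ k) → k ∉ T →
      (#(avoiding A T ∩ A k) : ℝ) ≤ p * #(avoiding A T)) :
    ∃ ω, ∀ i, ω ∉ A i := by
  obtain ⟨ω, hω⟩ := card_pos.mp (card_avoiding_pos hx₀ hx₁ hpx hΓ hind univ)
  exact ⟨ω, fun i => mem_avoiding.mp hω i (mem_univ i)⟩

theorem exists_forall_notMem_of_exp_mul_le [Fintype ι] [Nonempty Ω] (hp : 0 ≤ p)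
    (hpd : Real.exp 1 * p * (d + 1) ≤ 1) (hΓ : ∀ k, #(Γ k) ≤ d)
    (hind : ∀ k T, Disjoint T (Γ k) → k ∉ T →
      (#(avoiding A T ∩ A k) : ℝ) ≤ p * #(avoiding A T)) :
    ∃ ω, ∀ i, ω ∉ A i := by
  obtain ⟨x, hx₀, hx₁, hpx⟩ := Real.exists_le_mul_one_sub_pow_of_exp_mul_le hp hpd
  exact exists_forall_notMem hx₀ hx₁ hpx hΓ hind

end LovaszLocalLemma

namespace DNF

open LovaszLocalLemma

variable {α ι : Type*} [DecidableEq α]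

def vars (c : Finset (α × Bool)) : Finset α := c.image Prod.fst

theorem card_vars {c : Finset (α × Bool)} (hc : Set.InjOn Prod.fst (c : Set (α × Bool))) :
    #(vars c) = #c :=
  card_image_of_injOn hc

def neighbors [Fintype ι] [DecidableEq ι] (C : ι → Finset (α × Bool)) (k : ι) : Finset ι :=
  univ.filter fun j => j ≠ k ∧ ∃ l₁ ∈ C k, ∃ l₂ ∈ C j, l₁.1 = l₂.1

theorem disjoint_vars_of_notMem_neighbors [Fintype ι] [DecidableEq ι]
    {C : ι → Finset (α × Bool)} {j k : ι} (hj : j ∉ neighbors C k) (hjk : j ≠ k) :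
    Disjoint (vars (C j)) (vars (C k)) := by
  simp only [neighbors, mem_filter, mem_univ, true_and, not_and, not_exists] at hj
  simp only [vars, disjoint_left, mem_image]
  rintro _ ⟨l₂, hl₂, rfl⟩ ⟨l₁, hl₁, he⟩
  exact hj hjk l₁ hl₁ l₂ hl₂ he

variable [Fintype α]

def satisfying (c : Finset (α × Bool)) : Finset (α → Bool) :=
  univ.filter fun a => ∀ l ∈ c, a l.1 = l.2

theorem mem_satisfying_congr {c : Finset (α × Bool)} {a b : α → Bool}
    (h : ∀ i ∈ vars c, a i = b i) : a ∈ satisfying c ↔ b ∈ satisfying c := by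
  simp only [satisfying, mem_filter, mem_univ, true_and]
  refine forall₂_congr fun l hl => ?_
  rw [h l.1 (mem_image_of_mem _ hl)]

variable {c : Finset (α × Bool)}

/-- With distinct variables, the sign of the literal on `i` can be read off as
`(i, true) ∈ c`. -/
theorem mem_satisfying_iff (hc : Set.InjOn Prod.fst (c : Set (α × Bool))) {a : α → Bool} :
    a ∈ satisfying c ↔ ∀ i ∈ vars c, a i = decide ((i, true) ∈ c) := by
  have hsign : ∀ l ∈ c, decide ((l.1, true) ∈ c) = l.2 := by
    rintro ⟨i, _ | _⟩ hl
    · simpa using fun ht : (i, true) ∈ c => Bool.false_ne_true (congrArg Prod.snd (hc hl ht rfl))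
    · simpa using hl
  simp only [satisfying, vars, mem_filter, mem_univ, true_and, forall_mem_image]
  exact forall₂_congr fun l hl => by rw [hsign l hl]

theorem card_avoiding_inter_satisfying_mul_two_pow {C : ι → Finset (α × Bool)} {k : ι}
    (hk : Set.InjOn Prod.fst (C k : Set (α × Bool))) {T : Finset ι}
    (hT : ∀ j ∈ T, Disjoint (vars (C j)) (vars (C k))) :
    #(avoiding (fun j => satisfying (C j)) T ∩ satisfying (C k)) * 2 ^ #(C k) =
      #(avoiding (fun j => satisfying (C j)) T) := by
  have hinv : ∀ a b, (∀ i ∉ vars (C k), a i = b i) →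
      a ∈ avoiding (fun j => satisfying (C j)) T →
        b ∈ avoiding (fun j => satisfying (C j)) T := by
    intro a b hab ha
    simp only [mem_avoiding] at ha ⊢
    intro j hj
    rw [← mem_satisfying_congr fun i hi => hab i (disjoint_left.mp (hT j hj) hi)]
    exact ha j hj
  rw [← card_vars hk, ← card_filter_eqOn_mul_pow _ (fun i => decide ((i, true) ∈ C k)) _ hinv,
    Fintype.card_bool]
  congr 2
  ext a
  simp [mem_satisfying_iff hk]

theorem card_avoiding_inter_satisfying_le [Fintype ι] [DecidableEq ι]
    {C : ι → Finset (α × Bool)} {m : ℕ} (hm : ∀ k, #(C k) = m)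
    (hdistinct : ∀ k, Set.InjOn Prod.fst (C k : Set (α × Bool)))
    {k : ι} {T : Finset ι} (hT : Disjoint T (neighbors C k)) (hkT : k ∉ T) :
    (#(avoiding (fun j => satisfying (C j)) T ∩ satisfying (C k)) : ℝ) ≤
      ((2 : ℝ) ^ m)⁻¹ * #(avoiding (fun j => satisfying (C j)) T) := by
  have hvars j (hj : j ∈ T) : Disjoint (vars (C j)) (vars (C k)) :=
    disjoint_vars_of_notMem_neighbors (disjoint_left.mp hT hj) (ne_of_mem_of_not_mem hj hkT)
  rw [← card_avoiding_inter_satisfying_mul_two_pow (hdistinct k) hvars, hm k]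
  push_cast
  rw [mul_comm, mul_inv_cancel_right₀ (by positivity)]

end DNF

/-- If every clause of a DNF has exactly `m` literals on distinct variables, every clause
shares a variable with at most `d` other clauses, and `e * (d+1) ≤ 2^m`, then the DNF is
not a tautology. -/
theorem lll_dnf_not_tautology (n N m d : ℕ) (C : Fin N → Finset (Fin n × Bool))
    (hm : ∀ k, (C k).card = m)
    (hdistinct : ∀ k, ∀ l₁ ∈ C k, ∀ l₂ ∈ C k, l₁.1 = l₂.1 → l₁ = l₂)
    (hd : ∀ i : Fin N,
      (Finset.univ.filter (fun j : Fin N => j ≠ i ∧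
        ∃ l₁ ∈ C i, ∃ l₂ ∈ C j, l₁.1 = l₂.1)).card ≤ d)
    (hcond : Real.exp 1 * ((d : ℝ) + 1) ≤ 2 ^ m) :
    ¬ ∀ a : Fin n → Bool, ∃ k : Fin N, ∀ l ∈ C k, a l.1 = l.2 := by
  intro htaut
  have hp : Real.exp 1 * ((2 : ℝ) ^ m)⁻¹ * (d + 1) ≤ 1 := by
    rwa [mul_right_comm, ← div_eq_mul_inv, div_le_one (by positivity)]
  obtain ⟨a, ha⟩ := LovaszLocalLemma.exists_forall_notMem_of_exp_mul_le
    (A := fun k => DNF.satisfying (C k)) (Γ := DNF.neighbors C) (by positivity) hp hd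
    fun _ _ => DNF.card_avoiding_inter_satisfying_le hm hdistinct
  obtain ⟨k, hk⟩ := htaut a
  exact ha k (by simpa [DNF.satisfying] using hk)
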